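/- Let n ≥ 0 and let f ∈ ℤ[t^{±1}, q^{±1}]. Then φ̃_b(f) is divisible by (q;q)_n in ℤ[q^{±1}] for every integer b if and only if f belongs to the ideal I_n of ℤ[t^{±1}, q^{±1}] generated by the elements c_{k,n} := (t;q)_k · (q^{k+1};q)_{n−k} for k = 0, 1, …, n. -/

import Mathlib

/-!
Under `φ̃_b` the generator `c_{k,n}` becomes `(q^b;q)_k (q^{k+1};q)_{n-k}`, and the `q`-Pascal rule
shows that `(q;q)_k` divides `(q^b;q)_k` for every integer `b`; this gives one direction.

Conversely, `t (t;q)_k = q^{-k} ((t;q)_k - (t;q)_{k+1})` and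
`t⁻¹ (t;q)_k = t⁻¹ (t;q)_{k+1} + q^k (t;q)_k`, with `(t;q)_n ∈ I_n`, so modulo `I_n` every `f` is a
`ℤ[q^{±1}]`-combination `∑_{k<n} a_k (t;q)_k`. Specialising at `b = -m`, where `(q^{-m};q)_k`
vanishes for `k > m` and `(q^{-m};q)_m` is a unit multiple of `(q;q)_m`, shows by induction on `m`
that `(q^{m+1};q)_{n-m}` divides `a_m`, so every term `a_k (t;q)_k` lies in `I_n`.
-/

noncomputable section

open AddMonoidAlgebra

/-- The Laurent polynomial ring `ℤ[t^{±1}, q^{±1}]`, realized as the monoid algebra of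
`ℤ × ℤ` over `ℤ` (the monomial `t^i q^j` corresponds to the group element `(i,j)`). -/
abbrev TwoLaurent : Type := AddMonoidAlgebra ℤ (ℤ × ℤ)

/-- The variable `t`. -/
def tVar : TwoLaurent := AddMonoidAlgebra.of' ℤ (ℤ × ℤ) (1, 0)

/-- The variable `q`. -/
def qVar : TwoLaurent := AddMonoidAlgebra.of' ℤ (ℤ × ℤ) (0, 1)

/-- The generators `c_{k,n} = (t;q)_k (q^{k+1};q)_{n−k}` of Habiro's ideal `I_n`. -/
def cElt (k n : ℕ) : TwoLaurent :=
  (∏ i ∈ Finset.range k, (1 - tVar * qVar ^ i)) *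
    ∏ i ∈ Finset.range (n - k), (1 - qVar ^ (k + 1 + i))

/-- The `ℤ[q^{±1}]`-algebra map `φ̃_b : ℤ[t^{±1},q^{±1}] → ℤ[q^{±1}]`, `t ↦ q^b`,
induced by the additive map `(i,j) ↦ b·i + j` on exponents. -/
def phiTilde (b : ℤ) : TwoLaurent →+* LaurentPolynomial ℤ :=
  AddMonoidAlgebra.mapDomainRingHom ℤ
    (b • (AddMonoidHom.fst ℤ ℤ) + AddMonoidHom.snd ℤ ℤ)

/-- `(q;q)_n` in `ℤ[q^{±1}]`. -/
def pochQ (n : ℕ) : LaurentPolynomial ℤ :=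
  ∏ i ∈ Finset.range n, (1 - LaurentPolynomial.T ((i : ℤ) + 1))

open LaurentPolynomial Finset

section QPochhammer

variable {R : Type*} [CommRing R]

/-- `(q^c;q)_m` with `q = T 1`. -/
def qPochhammer (c : ℤ) (m : ℕ) : R[T;T⁻¹] :=
  ∏ i ∈ range m, (1 - T (c + i))

theorem qPochhammer_zero (c : ℤ) : qPochhammer c 0 = (1 : R[T;T⁻¹]) :=
  prod_range_zero _

theorem qPochhammer_succ (c : ℤ) (m : ℕ) :
    qPochhammer c (m + 1) = qPochhammer c m * (1 - T (c + m) : R[T;T⁻¹]) :=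
  prod_range_succ _ _

theorem qPochhammer_add (c : ℤ) (k d : ℕ) :
    qPochhammer c (k + d) = qPochhammer c k * (qPochhammer (c + k) d : R[T;T⁻¹]) := by
  simp only [qPochhammer, prod_range_add, Nat.cast_add, add_assoc]

theorem qPochhammer_succ' (c : ℤ) (m : ℕ) :
    qPochhammer c (m + 1) = (1 - T c) * (qPochhammer (c + 1) m : R[T;T⁻¹]) := by
  rw [add_comm m, qPochhammer_add, qPochhammer_succ, qPochhammer_zero]
  simp

theorem qPochhammer_neg_eq_zero {j m : ℕ} (h : j < m) : qPochhammer (-j) m = (0 : R[T;T⁻¹]) :=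
  prod_eq_zero (mem_range.2 h) (by simp)

theorem qPochhammer_one_eq_mul {k n : ℕ} (hk : k ≤ n) :
    qPochhammer 1 n = qPochhammer 1 k * (qPochhammer (k + 1) (n - k) : R[T;T⁻¹]) := by
  rw [add_comm (k : ℤ), ← qPochhammer_add, Nat.add_sub_cancel' hk]

/-- The `q`-Pascal rule. -/
theorem qPochhammer_add_one_succ (c : ℤ) (m : ℕ) :
    qPochhammer (c + 1) (m + 1) =
      qPochhammer c (m + 1) + T c * (1 - T (m + 1)) * (qPochhammer (c + 1) m : R[T;T⁻¹]) := by
  rw [qPochhammer_succ, qPochhammer_succ']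
  have : (T (c + 1 + m) : R[T;T⁻¹]) = T c * T (m + 1) := by rw [← T_add]; ring_nf
  rw [this]
  ring

theorem qPochhammer_one_dvd (m : ℕ) (c : ℤ) : qPochhammer 1 m ∣ (qPochhammer c m : R[T;T⁻¹]) := by
  induction m generalizing c with
  | zero => simp [qPochhammer_zero]
  | succ m ih =>
    have hterm : ∀ c : ℤ, qPochhammer 1 (m + 1) ∣
        T c * (1 - T (m + 1)) * (qPochhammer (c + 1) m : R[T;T⁻¹]) := fun c => by
      rw [qPochhammer_succ, add_comm (1 : ℤ)]
      exact (mul_dvd_mul_right (ih (c + 1)) _).trans (Dvd.intro_left (T c) (by ring))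
    have hstep : ∀ c : ℤ, qPochhammer 1 (m + 1) ∣ (qPochhammer c (m + 1) : R[T;T⁻¹]) ↔
        qPochhammer 1 (m + 1) ∣ (qPochhammer (c + 1) (m + 1) : R[T;T⁻¹]) := fun c => by
      rw [qPochhammer_add_one_succ, dvd_add_left (hterm c)]
    induction c using Int.induction_on with
    | zero =>
      have h0 : qPochhammer 0 (m + 1) = (0 : R[T;T⁻¹]) := by
        simpa using qPochhammer_neg_eq_zero (R := R) m.succ_pos
      simp [h0]
    | succ i hi => exact (hstep i).mp hi
    | pred i hi => exact (hstep _).mpr (by rwa [sub_add_cancel])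

theorem associated_one_sub_T_neg (j : ℤ) : Associated (1 - T (-j) : R[T;T⁻¹]) (1 - T j) :=
  ⟨-(isUnit_T (R := R) j).unit, by
    rw [Units.val_neg, IsUnit.unit_spec, mul_neg, sub_mul, one_mul, ← T_add, neg_add_cancel, T_zero]
    ring⟩

theorem associated_qPochhammer_neg_self (m : ℕ) :
    Associated (qPochhammer (-m) m) (qPochhammer 1 m : R[T;T⁻¹]) := by
  induction m with
  | zero => simp [qPochhammer_zero]
  | succ m ih =>
    rw [qPochhammer_succ', qPochhammer_succ, mul_comm, Nat.cast_succ, neg_add, neg_add_cancel_right,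
      add_comm (1 : ℤ), ← neg_add]
    exact ih.mul_mul (associated_one_sub_T_neg _)

theorem qPochhammer_one_ne_zero [IsDomain R] (m : ℕ) : qPochhammer 1 m ≠ (0 : R[T;T⁻¹]) := by
  refine prod_ne_zero_iff.2 fun i _ => sub_ne_zero.2 fun h => ?_
  have := congrArg (coeff · 0) h
  simp [T_apply] at this
  omega

theorem qPochhammer_dvd_of_forall_dvd_sum [IsDomain R] {n : ℕ} (a : ℕ → R[T;T⁻¹])
    (h : ∀ b : ℤ, qPochhammer 1 n ∣ ∑ k ∈ range n, a k * qPochhammer b k) :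
    ∀ m < n, qPochhammer (m + 1) (n - m) ∣ a m := by
  intro m
  induction m using Nat.strong_induction_on with
  | _ m ih =>
  intro hm
  have hrest : qPochhammer 1 n ∣ ∑ k ∈ (range n).erase m, a k * qPochhammer (-m) k := by
    refine dvd_sum fun k hk => ?_
    obtain ⟨hkm, hkn⟩ : k ≠ m ∧ k < n := by simpa using hk
    rcases hkm.lt_or_gt with hlt | hgt
    · rw [qPochhammer_one_eq_mul hkn.le, mul_comm (a k)]
      exact mul_dvd_mul (qPochhammer_one_dvd k _) (ih k hlt hkn)
    · simp [qPochhammer_neg_eq_zero hgt]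
  have hm' : qPochhammer 1 n ∣ a m * qPochhammer (-m) m := by
    rw [← dvd_add_left hrest, add_sum_erase _ (fun k => a k * qPochhammer (-m) k) (mem_range.2 hm)]
    exact h _
  rw [((associated_qPochhammer_neg_self m).mul_left (a m)).dvd_iff_dvd_right,
    qPochhammer_one_eq_mul hm.le, mul_comm (a m)] at hm'
  exact (mul_dvd_mul_iff_left (qPochhammer_one_ne_zero m)).mp hm'

end QPochhammer

theorem pochQ_eq_qPochhammer (n : ℕ) : pochQ n = qPochhammer 1 n := by
  simp only [pochQ, qPochhammer, add_comm]

def laurentQ : LaurentPolynomial ℤ →+* TwoLaurent :=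
  mapDomainRingHom ℤ (AddMonoidHom.inr ℤ ℤ)

def tVarInv : TwoLaurent := of' ℤ (ℤ × ℤ) (-1, 0)

def tPoch (k : ℕ) : TwoLaurent := ∏ i ∈ range k, (1 - tVar * qVar ^ i)

def habiroIdeal (n : ℕ) : Ideal TwoLaurent := Ideal.span {g : TwoLaurent | ∃ k ≤ n, g = cElt k n}

theorem phiTilde_laurentQ (b : ℤ) (u : LaurentPolynomial ℤ) : phiTilde b (laurentQ u) = u := by
  rw [phiTilde, laurentQ, ← RingHom.comp_apply, ← mapDomainRingHom_comp]
  have : (b • AddMonoidHom.fst ℤ ℤ + AddMonoidHom.snd ℤ ℤ).comp (AddMonoidHom.inr ℤ ℤ) = .id ℤ := by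
    ext; simp
  rw [this, mapDomainRingHom_id, RingHom.id_apply]

theorem laurentQ_T_one : laurentQ (T 1) = qVar := by
  rw [laurentQ, mapDomainRingHom_apply, T, mapDomain_single]
  rfl

theorem phiTilde_tVar (b : ℤ) : phiTilde b tVar = T b := by
  rw [phiTilde, mapDomainRingHom_apply, tVar, of'_apply, mapDomain_single, T]
  congr 1
  simp

theorem phiTilde_qVar (b : ℤ) : phiTilde b qVar = T 1 := by
  rw [phiTilde, mapDomainRingHom_apply, qVar, of'_apply, mapDomain_single, T]
  congr 1
  simp

theorem laurentQ_T_natCast (i : ℕ) : laurentQ (T i) = qVar ^ i := by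
  rw [← mul_one (i : ℤ), ← T_pow, map_pow, laurentQ_T_one]

theorem phiTilde_tPoch (b : ℤ) (k : ℕ) : phiTilde b (tPoch k) = qPochhammer b k := by
  simp only [tPoch, qPochhammer, map_prod, map_sub, map_one, map_mul, map_pow, phiTilde_tVar,
    phiTilde_qVar, T_pow, mul_one, ← T_add]

theorem cElt_eq_tPoch_mul (k n : ℕ) :
    cElt k n = tPoch k * laurentQ (qPochhammer (k + 1) (n - k)) := by
  simp only [cElt, tPoch, qPochhammer, map_prod, map_sub, map_one, ← laurentQ_T_natCast]
  push_cast
  rfl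

theorem tPoch_mem_habiroIdeal (n : ℕ) : tPoch n ∈ habiroIdeal n :=
  Ideal.subset_span ⟨n, le_rfl, by simp [cElt, tPoch]⟩

theorem qPochhammer_one_dvd_phiTilde {n : ℕ} {f : TwoLaurent} (hf : f ∈ habiroIdeal n) (b : ℤ) :
    qPochhammer 1 n ∣ phiTilde b f := by
  suffices habiroIdeal n ≤ (Ideal.span {qPochhammer 1 n}).comap (phiTilde b) from
    Ideal.mem_span_singleton.mp (this hf)
  rw [habiroIdeal, Ideal.span_le]
  rintro _ ⟨k, hk, rfl⟩
  rw [SetLike.mem_coe, Ideal.mem_comap, Ideal.mem_span_singleton, cElt_eq_tPoch_mul, map_mul,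
    phiTilde_tPoch, phiTilde_laurentQ, qPochhammer_one_eq_mul hk]
  exact mul_dvd_mul (qPochhammer_one_dvd k b) dvd_rfl

theorem tPoch_succ (k : ℕ) : tPoch (k + 1) = tPoch k * (1 - tVar * qVar ^ k) :=
  prod_range_succ _ _

theorem tVarInv_mul_tVar : tVarInv * tVar = 1 := by
  rw [tVarInv, tVar, of'_apply, of'_apply, single_mul_single]
  simp only [Prod.mk_add_mk, neg_add_cancel, add_zero, mul_one]
  rfl

theorem tVar_mul_tPoch (k : ℕ) :
    tVar * tPoch k = laurentQ (T (-k)) * (tPoch k - tPoch (k + 1)) := by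
  have hinv : laurentQ (T (-k)) * qVar ^ k = 1 := by
    rw [← laurentQ_T_natCast, ← map_mul, ← T_add, neg_add_cancel, T_zero, map_one]
  rw [tPoch_succ]
  linear_combination (-(tVar * tPoch k)) * hinv

theorem tVarInv_mul_tPoch (k : ℕ) :
    tVarInv * tPoch k = tVarInv * tPoch (k + 1) + laurentQ (T k) * tPoch k := by
  rw [tPoch_succ, laurentQ_T_natCast]
  linear_combination (qVar ^ k * tPoch k) * tVarInv_mul_tVar

def habiroReducible (n : ℕ) : AddSubgroup TwoLaurent where
  carrier := {f | ∃ a : ℕ → LaurentPolynomial ℤ,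
    f - ∑ k ∈ range n, laurentQ (a k) * tPoch k ∈ habiroIdeal n}
  zero_mem' := ⟨0, by simp⟩
  add_mem' := by
    rintro f g ⟨a, ha⟩ ⟨b, hb⟩
    refine ⟨a + b, ?_⟩
    convert add_mem ha hb using 1
    simp only [Pi.add_apply, map_add, add_mul, sum_add_distrib]
    ring
  neg_mem' := by
    rintro f ⟨a, ha⟩
    refine ⟨-a, ?_⟩
    convert neg_mem ha using 1
    simp only [Pi.neg_apply, map_neg, neg_mul, sum_neg_distrib]
    ring

namespace habiroReducible

variable {n : ℕ}

theorem mem_of_mem_habiroIdeal {f : TwoLaurent} (hf : f ∈ habiroIdeal n) :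
    f ∈ habiroReducible n :=
  ⟨0, by simpa using hf⟩

theorem laurentQ_mul_mem (u : LaurentPolynomial ℤ) {f : TwoLaurent} (hf : f ∈ habiroReducible n) :
    laurentQ u * f ∈ habiroReducible n := by
  obtain ⟨a, ha⟩ := hf
  refine ⟨fun k => u * a k, ?_⟩
  convert Ideal.mul_mem_left _ (laurentQ u) ha using 1
  simp only [map_mul, mul_sub, mul_sum, mul_assoc]

theorem tPoch_mem {k : ℕ} (hk : k ≤ n) : tPoch k ∈ habiroReducible n := by
  rcases hk.lt_or_eq with hk | rfl
  · refine ⟨Pi.single k 1, ?_⟩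
    simp [Pi.single_apply, mem_range.2 hk]
  · exact mem_of_mem_habiroIdeal (tPoch_mem_habiroIdeal k)

theorem one_mem : (1 : TwoLaurent) ∈ habiroReducible n := by
  cases n with
  | zero => exact mem_of_mem_habiroIdeal (Ideal.subset_span ⟨0, le_rfl, by simp [cElt]⟩)
  | succ n => simpa [tPoch] using tPoch_mem (n := n + 1) (Nat.zero_le _)

theorem mul_mem_of_forall_mul_tPoch_mem {x f : TwoLaurent}
    (hx : ∀ k < n, x * tPoch k ∈ habiroReducible n) (hf : f ∈ habiroReducible n) :
    x * f ∈ habiroReducible n := by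
  obtain ⟨a, ha⟩ := hf
  have hsum : ∑ k ∈ range n, laurentQ (a k) * (x * tPoch k) ∈ habiroReducible n :=
    sum_mem fun k hk => laurentQ_mul_mem _ (hx k (mem_range.1 hk))
  have hrest : x * f - ∑ k ∈ range n, laurentQ (a k) * (x * tPoch k) ∈ habiroReducible n := by
    refine mem_of_mem_habiroIdeal ?_
    convert Ideal.mul_mem_left _ x ha using 1
    simp only [mul_sub, mul_sum, mul_left_comm]
  simpa using add_mem hrest hsum

theorem tVar_mul_mem {f : TwoLaurent} (hf : f ∈ habiroReducible n) :
    tVar * f ∈ habiroReducible n :=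
  mul_mem_of_forall_mul_tPoch_mem (fun k hk => tVar_mul_tPoch k ▸
    laurentQ_mul_mem _ (sub_mem (tPoch_mem hk.le) (tPoch_mem hk))) hf

theorem tVarInv_mul_tPoch_mem {k : ℕ} (hk : k ≤ n) : tVarInv * tPoch k ∈ habiroReducible n := by
  induction hk using Nat.decreasingInduction with
  | self => exact mem_of_mem_habiroIdeal (Ideal.mul_mem_left _ _ (tPoch_mem_habiroIdeal n))
  | of_succ k hk ih =>
    rw [tVarInv_mul_tPoch]
    exact add_mem ih (laurentQ_mul_mem _ (tPoch_mem hk.le))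

theorem tVarInv_mul_mem {f : TwoLaurent} (hf : f ∈ habiroReducible n) :
    tVarInv * f ∈ habiroReducible n :=
  mul_mem_of_forall_mul_tPoch_mem (fun _ hk => tVarInv_mul_tPoch_mem hk.le) hf

theorem single_fst_mem (i : ℤ) :
    (single ((i, 0) : ℤ × ℤ) (1 : ℤ) : TwoLaurent) ∈ habiroReducible n := by
  induction i using Int.induction_on with
  | zero => exact one_mem
  | succ i ih =>
    have : (single (((i : ℤ) + 1, 0) : ℤ × ℤ) (1 : ℤ) : TwoLaurent) =
        tVar * single ((i : ℤ), 0) 1 := by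
      rw [tVar, of'_apply, single_mul_single]
      simp [add_comm]
    exact this ▸ tVar_mul_mem ih
  | pred i ih =>
    have : (single ((-(i : ℤ) - 1, 0) : ℤ × ℤ) (1 : ℤ) : TwoLaurent) =
        tVarInv * single (-(i : ℤ), 0) 1 := by
      rw [tVarInv, of'_apply, single_mul_single]
      simp [sub_eq_neg_add]
    exact this ▸ tVarInv_mul_mem ih

theorem eq_top (n : ℕ) : habiroReducible n = ⊤ := by
  refine (AddSubgroup.eq_top_iff' _).2 fun f => ?_
  induction f using AddMonoidAlgebra.induction_linear with
  | zero => exact zero_mem _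
  | add f g hf hg => exact add_mem hf hg
  | single p r =>
    have : (single p r : TwoLaurent) = laurentQ (single p.2 r) * single (p.1, 0) 1 := by
      rw [laurentQ, mapDomainRingHom_apply, mapDomain_single, single_mul_single]
      simp
    exact this ▸ laurentQ_mul_mem _ (single_fst_mem p.1)

end habiroReducible

theorem sum_laurentQ_mul_tPoch_mem_habiroIdeal {n : ℕ} (a : ℕ → LaurentPolynomial ℤ)
    (h : ∀ b : ℤ, qPochhammer 1 n ∣ phiTilde b (∑ k ∈ range n, laurentQ (a k) * tPoch k)) :
    ∑ k ∈ range n, laurentQ (a k) * tPoch k ∈ habiroIdeal n := by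
  simp only [map_sum, map_mul, phiTilde_laurentQ, phiTilde_tPoch] at h
  refine Ideal.sum_mem _ fun k hk => ?_
  obtain ⟨v, hv⟩ := qPochhammer_dvd_of_forall_dvd_sum a h k (mem_range.1 hk)
  have : laurentQ (a k) * tPoch k = laurentQ v * cElt k n := by
    rw [hv, map_mul, cElt_eq_tPoch_mul]
    ring
  rw [this]
  exact Ideal.mul_mem_left _ _ (Ideal.subset_span ⟨k, (mem_range.1 hk).le, rfl⟩)

/-- Let `n ≥ 0` and `f ∈ ℤ[t^{±1},q^{±1}]`.  Then `φ̃_b(f)` is divisible by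
`(q;q)_n` in `ℤ[q^{±1}]` for every integer `b` if and only if `f` belongs to the ideal `I_n`
generated by `c_{k,n} = (t;q)_k (q^{k+1};q)_{n−k}`, `k = 0, 1, …, n`. -/
theorem habiro_ideal_characterization (n : ℕ) (f : TwoLaurent) :
    (∀ b : ℤ, pochQ n ∣ phiTilde b f) ↔
      f ∈ Ideal.span {g : TwoLaurent | ∃ k ≤ n, g = cElt k n} := by
  change _ ↔ f ∈ habiroIdeal n
  simp only [pochQ_eq_qPochhammer]
  refine ⟨fun hf => ?_, fun hf b => qPochhammer_one_dvd_phiTilde hf b⟩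
  obtain ⟨a, ha⟩ : f ∈ habiroReducible n := habiroReducible.eq_top n ▸ AddSubgroup.mem_top f
  have hsum := sum_laurentQ_mul_tPoch_mem_habiroIdeal a fun b => by
    simpa using dvd_sub (hf b) (qPochhammer_one_dvd_phiTilde ha b)
  simpa using add_mem ha hsum

end
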